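/- arXiv:1301.1937 — 6 statements merged into one kernel-verified Lean document; each statement's English description precedes it below -/
import Mathlib

section
/- Let a < b and c < d be real numbers and let R = [a,b] × [c,d] be the solid closed rectangle in ℝ². Let F = (M, N) be a vector field defined and differentiable on (an open neighborhood of) R. Then there exist points x, y ∈ R such that (1/area(R)) times the counterclockwise circulation of F around ∂R equals ∂N/∂x(y) − ∂M/∂y(x), where area(R) = (b−a)(d−c). -/
/-!
The circulation regroups as `∫_c^d (N(b,t) - N(a,t)) dt - ∫_a^b (M(s,d) - M(s,c)) ds`. The mean
value theorem for integrals replaces these integrals by `(d - c) (N(b,t₀) - N(a,t₀))` and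
`(b - a) (M(s₀,d) - M(s₀,c))`, and Lagrange's mean value theorem along the segments
`t = t₀` and `s = s₀` turns the two differences into `(b - a) ∂N/∂x (ξ,t₀)` and
`(d - c) ∂M/∂y (s₀,η)`.
-/

open MeasureTheory Set

theorem ContinuousOn.slice_snd {α β γ : Type*} [TopologicalSpace α] [TopologicalSpace β]
    [TopologicalSpace γ] {f : α × β → γ} {s : Set α} {t : Set β}
    (hf : ContinuousOn f (s ×ˢ t)) {x : α} (hx : x ∈ s) : ContinuousOn (fun y => f (x, y)) t :=
  hf.uncurry_left (f := Function.curry f) x hx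

theorem ContinuousOn.slice_fst {α β γ : Type*} [TopologicalSpace α] [TopologicalSpace β]
    [TopologicalSpace γ] {f : α × β → γ} {s : Set α} {t : Set β}
    (hf : ContinuousOn f (s ×ˢ t)) {y : β} (hy : y ∈ t) : ContinuousOn (fun x => f (x, y)) s :=
  hf.uncurry_right (f := Function.curry f) y hy

theorem exists_intervalIntegral_eq_mul_sub {f : ℝ → ℝ} {a b : ℝ} (hab : a < b)
    (hf : ContinuousOn f (Icc a b)) : ∃ c ∈ Ioo a b, ∫ x in a..b, f x = f c * (b - a) := by
  obtain ⟨c, hc, hfc⟩ := exists_eq_interval_average hab.ne (uIcc_of_le hab.le ▸ hf)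
  refine ⟨c, uIoo_of_le hab.le ▸ hc, ?_⟩
  rw [hfc, interval_average_eq_div, div_mul_cancel₀ _ (sub_ne_zero.2 hab.ne')]

theorem exists_fderiv_apply_eq_slope_of_hasDerivAt {E : Type*} [NormedAddCommGroup E]
    [NormedSpace ℝ E] {f : E → ℝ} {γ : ℝ → E} {v : E} {a b : ℝ} (hab : a < b)
    (hγ : ∀ s, HasDerivAt γ v s) (hf : ∀ s ∈ Icc a b, DifferentiableAt ℝ f (γ s)) :
    ∃ ξ ∈ Ioo a b, fderiv ℝ f (γ ξ) v = (f (γ b) - f (γ a)) / (b - a) :=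
  exists_hasDerivAt_eq_slope (f ∘ γ) (fun s => fderiv ℝ f (γ s) v) hab
    (fun s hs => ((hf s hs).continuousAt.comp (hγ s).continuousAt).continuousWithinAt)
    (fun s hs => (hf s (Ioo_subset_Icc_self hs)).hasFDerivAt.comp_hasDerivAt s (hγ s))

theorem circulation_eq_sub_integral_sub {E : Type*} [NormedAddCommGroup E] [NormedSpace ℝ E]
    {a b c d : ℝ} (hab : a ≤ b) (hcd : c ≤ d) {M N : ℝ × ℝ → E}
    (hM : ContinuousOn M (Icc a b ×ˢ Icc c d))
    (hN : ContinuousOn N (Icc a b ×ˢ Icc c d)) :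
    (∫ t in a..b, M (t, c)) + (∫ t in c..d, N (b, t))
        - (∫ t in a..b, M (t, d)) - (∫ t in c..d, N (a, t))
      = (∫ t in c..d, N (b, t) - N (a, t)) - ∫ t in a..b, M (t, d) - M (t, c) := by
  have hNslice {x : ℝ} (hx : x ∈ Icc a b) : IntervalIntegrable (fun t => N (x, t)) volume c d :=
    (hN.slice_snd hx).intervalIntegrable_of_Icc hcd
  have hMslice {y : ℝ} (hy : y ∈ Icc c d) : IntervalIntegrable (fun t => M (t, y)) volume a b :=
    (hM.slice_fst hy).intervalIntegrable_of_Icc hab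
  rw [intervalIntegral.integral_sub (hNslice (right_mem_Icc.2 hab)) (hNslice (left_mem_Icc.2 hab)),
    intervalIntegral.integral_sub (hMslice (right_mem_Icc.2 hcd)) (hMslice (left_mem_Icc.2 hcd))]
  abel

/-- **Mean Value Theorem for vector fields on rectangles.**
If `F = (M, N)` is a vector field differentiable on (a neighborhood of) the
rectangle `R = [a,b] × [c,d]` (with `a < b`, `c < d`), then there are points
`x, y ∈ R` such that `(1/area R)` times the counterclockwise circulation of `F`
around `∂R` equals `∂N/∂x (y) − ∂M/∂y (x)`. -/
theorem mvt_for_vector_fields_on_rectangles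
    (a b c d : ℝ) (hab : a < b) (hcd : c < d)
    (M N : ℝ × ℝ → ℝ)
    (hM : ∀ p ∈ Set.Icc a b ×ˢ Set.Icc c d, DifferentiableAt ℝ M p)
    (hN : ∀ p ∈ Set.Icc a b ×ˢ Set.Icc c d, DifferentiableAt ℝ N p) :
    ∃ x ∈ Set.Icc a b ×ˢ Set.Icc c d, ∃ y ∈ Set.Icc a b ×ˢ Set.Icc c d,
      (1 / ((b - a) * (d - c))) *
          ((∫ t in a..b, M (t, c)) + (∫ t in c..d, N (b, t))
            - (∫ t in a..b, M (t, d)) - (∫ t in c..d, N (a, t)))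
        = fderiv ℝ N y (1, 0) - fderiv ℝ M x (0, 1) := by
  have hMc : ContinuousOn M (Icc a b ×ˢ Icc c d) :=
    fun p hp => (hM p hp).continuousAt.continuousWithinAt
  have hNc : ContinuousOn N (Icc a b ×ˢ Icc c d) :=
    fun p hp => (hN p hp).continuousAt.continuousWithinAt
  obtain ⟨t₀, ht₀, hNint⟩ :=
    exists_intervalIntegral_eq_mul_sub (f := fun t => N (b, t) - N (a, t)) hcd
      ((hNc.slice_snd (right_mem_Icc.2 hab.le)).sub (hNc.slice_snd (left_mem_Icc.2 hab.le)))
  obtain ⟨s₀, hs₀, hMint⟩ :=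
    exists_intervalIntegral_eq_mul_sub (f := fun s => M (s, d) - M (s, c)) hab
      ((hMc.slice_fst (right_mem_Icc.2 hcd.le)).sub (hMc.slice_fst (left_mem_Icc.2 hcd.le)))
  obtain ⟨ξ, hξ, hNξ⟩ := exists_fderiv_apply_eq_slope_of_hasDerivAt (f := N) hab
    (fun s => (hasDerivAt_id' s).prodMk (hasDerivAt_const s t₀))
    (fun s hs => hN _ ⟨hs, Ioo_subset_Icc_self ht₀⟩)
  obtain ⟨η, hη, hMη⟩ := exists_fderiv_apply_eq_slope_of_hasDerivAt (f := M) hcd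
    (fun s => (hasDerivAt_const s s₀).prodMk (hasDerivAt_id' s))
    (fun s hs => hM _ ⟨Ioo_subset_Icc_self hs₀, hs⟩)
  refine ⟨(s₀, η), ⟨Ioo_subset_Icc_self hs₀, Ioo_subset_Icc_self hη⟩,
    (ξ, t₀), ⟨Ioo_subset_Icc_self hξ, Ioo_subset_Icc_self ht₀⟩, ?_⟩
  rw [circulation_eq_sub_integral_sub hab.le hcd.le hMc hNc, hNint, hMint, hNξ, hMη]
  field_simp [sub_ne_zero.2 hab.ne', sub_ne_zero.2 hcd.ne']
end

section
/- Let a < b and c < d, let R = [a,b] × [c,d] ⊂ ℝ², and let F = (M, N) be a differentiable vector field on R such that either M = 0 identically or N = 0 identically. Then there exists a point x ∈ R such that (1/area(R)) times the counterclockwise circulation of F around ∂R equals scurl F(x). -/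
/-!
Only one component of `F` is nonzero, so the circulation is a difference of two parallel edge
integrals, say `∫_c^d (N(b,t) - N(a,t)) dt`. The mean value theorem for integrals replaces it by
`(d - c) (N(b,η) - N(a,η))` for some `η ∈ [c,d]`, and Lagrange's mean value theorem along the
segment `[a,b] × {η}` turns this into `(b - a)(d - c) ∂N/∂x(ξ,η)`. The case `N = 0` is the same
argument with the coordinates swapped.
-/

open Set

theorem exists_integral_sub_eq_mul_fderiv_fst {a b c d : ℝ} (hab : a < b) (hcd : c < d)
    {f : ℝ × ℝ → ℝ} (hf : ∀ p ∈ Icc a b ×ˢ Icc c d, DifferentiableAt ℝ f p) :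
    ∃ p ∈ Icc a b ×ˢ Icc c d,
      (∫ t in c..d, f (b, t)) - (∫ t in c..d, f (a, t))
        = (b - a) * (d - c) * fderiv ℝ f p (1, 0) := by
  have hcont : ∀ s ∈ Icc a b, ContinuousOn (fun t => f (s, t)) (uIcc c d) := by
    intro s hs t ht
    rw [uIcc_of_le hcd.le] at ht
    exact ((hf (s, t) ⟨hs, ht⟩).continuousAt.comp
      (Continuous.prodMk_right s).continuousAt).continuousWithinAt
  have hb := hcont b (right_mem_Icc.2 hab.le)
  have ha := hcont a (left_mem_Icc.2 hab.le)
  obtain ⟨η, hη, hη_avg⟩ := exists_eq_interval_average hcd.ne (hb.fun_sub ha)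
  rw [uIoo_of_le hcd.le] at hη
  rw [interval_average_eq_div, intervalIntegral.integral_sub hb.intervalIntegrable
    ha.intervalIntegrable] at hη_avg
  have hderiv : ∀ s ∈ Icc a b,
      HasDerivAt (fun s => f (s, η)) (fderiv ℝ f (s, η) (1, 0)) s := fun s hs =>
    (hf (s, η) ⟨hs, Ioo_subset_Icc_self hη⟩).hasFDerivAt.comp_hasDerivAt s
      ((hasDerivAt_id s).prodMk (hasDerivAt_const s η))
  obtain ⟨ξ, hξ, hξ_slope⟩ := exists_hasDerivAt_eq_slope (fun s => f (s, η)) _ hab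
    (fun s hs => (hderiv s hs).continuousAt.continuousWithinAt)
    (fun s hs => hderiv s (Ioo_subset_Icc_self hs))
  refine ⟨(ξ, η), ⟨Ioo_subset_Icc_self hξ, Ioo_subset_Icc_self hη⟩, ?_⟩
  rw [hξ_slope, hη_avg]
  field_simp [(sub_pos.2 hab).ne', (sub_pos.2 hcd).ne']

theorem exists_integral_sub_eq_mul_fderiv_snd {a b c d : ℝ} (hab : a < b) (hcd : c < d)
    {f : ℝ × ℝ → ℝ} (hf : ∀ p ∈ Icc a b ×ˢ Icc c d, DifferentiableAt ℝ f p) :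
    ∃ p ∈ Icc a b ×ˢ Icc c d,
      (∫ t in a..b, f (t, d)) - (∫ t in a..b, f (t, c))
        = (b - a) * (d - c) * fderiv ℝ f p (0, 1) := by
  let σ := ContinuousLinearEquiv.prodComm ℝ ℝ ℝ
  obtain ⟨p, hp, hp_eq⟩ := exists_integral_sub_eq_mul_fderiv_fst hcd hab (f := f ∘ σ)
    fun p hp => σ.comp_right_differentiableAt_iff.2 (hf (σ p) hp.symm)
  refine ⟨σ p, hp.symm, ?_⟩
  rw [σ.comp_right_fderiv] at hp_eq
  simpa [σ, mul_comm (b - a)] using hp_eq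

/-- If `F = (M, N)` is a differentiable vector field on (a neighborhood of) the
rectangle `R = [a,b] × [c,d]` (with `a < b`, `c < d`) such that `M = 0`
identically or `N = 0` identically, then there is a point `x ∈ R` such that
`(1/area R)` times the counterclockwise circulation of `F` around `∂R` equals
`scurl F (x) = ∂N/∂x (x) − ∂M/∂y (x)`. -/
theorem circulation_eq_scurl_at_point
    (a b c d : ℝ) (hab : a < b) (hcd : c < d)
    (M N : ℝ × ℝ → ℝ)
    (hM : ∀ p ∈ Set.Icc a b ×ˢ Set.Icc c d, DifferentiableAt ℝ M p)
    (hN : ∀ p ∈ Set.Icc a b ×ˢ Set.Icc c d, DifferentiableAt ℝ N p)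
    (hzero : (∀ p, M p = 0) ∨ (∀ p, N p = 0)) :
    ∃ x ∈ Set.Icc a b ×ˢ Set.Icc c d,
      (1 / ((b - a) * (d - c))) *
          ((∫ t in a..b, M (t, c)) + (∫ t in c..d, N (b, t))
            - (∫ t in a..b, M (t, d)) - (∫ t in c..d, N (a, t)))
        = fderiv ℝ N x (1, 0) - fderiv ℝ M x (0, 1) := by
  have harea : (b - a) * (d - c) ≠ 0 := mul_ne_zero (sub_pos.2 hab).ne' (sub_pos.2 hcd).ne'
  rcases hzero with hM0 | hN0
  · obtain rfl : M = 0 := funext hM0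
    obtain ⟨p, hp, hp_eq⟩ := exists_integral_sub_eq_mul_fderiv_fst hab hcd hN
    refine ⟨p, hp, ?_⟩
    simp only [Pi.zero_apply, intervalIntegral.integral_zero, fderiv_zero, zero_apply]
    rw [zero_add, sub_zero, sub_zero, hp_eq, one_div, inv_mul_cancel_left₀ harea]
  · obtain rfl : N = 0 := funext hN0
    obtain ⟨p, hp, hp_eq⟩ := exists_integral_sub_eq_mul_fderiv_snd hab hcd hM
    refine ⟨p, hp, ?_⟩
    simp only [Pi.zero_apply, intervalIntegral.integral_zero, fderiv_zero, zero_apply]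
    rw [add_zero, sub_zero, zero_sub, ← neg_sub (∫ t in a..b, M (t, d)), hp_eq, mul_neg,
      one_div, inv_mul_cancel_left₀ harea]
end

section
/- Let (Rₙ) be a sequence of solid closed rectangles in ℝ² with sides parallel to the coordinate axes and positive area, all contained in a fixed open set U, such that every Rₙ contains a fixed point p and the diameters of the Rₙ tend to 0 as n → ∞. Let F = (M,N) be a C¹ vector field on U. Then the sequence (1/area(Rₙ)) · (counterclockwise circulation of F around ∂Rₙ) converges to scurl F(p) as n → ∞. -/
/-!
By Green's theorem on a rectangle (the divergence theorem for boxes applied to `(N, -M)`), the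
circulation of `F` around `∂Rₙ` equals the integral of `scurl F` over `Rₙ`, so the sequence in
question is the sequence of averages of the continuous function `scurl F` over `Rₙ`. Since the
`Rₙ` contain `p` and their diameters tend to `0`, they shrink to `p`, and the averages of a
function continuous at `p` over such sets tend to its value at `p`.
-/

open MeasureTheory Filter

open Metric Topology Set

variable {E : Type*} [NormedAddCommGroup E] [NormedSpace ℝ E]

theorem tendsto_smallSets_nhds_of_tendsto_diam {α ι : Type*} [PseudoMetricSpace α]
    {s : ι → Set α} {l : Filter ι} {x : α} (hx : ∀ i, x ∈ s i)
    (hs : ∀ i, Bornology.IsBounded (s i)) (hdiam : Tendsto (fun i => diam (s i)) l (𝓝 0)) :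
    Tendsto s l (𝓝 x).smallSets :=
  ((tendsto_closedBall_smallSets x).comp hdiam).smallSets_mono <|
    Eventually.of_forall fun i _ hy => mem_closedBall.2 (dist_le_diam_of_mem (hs i) hy (hx i))

theorem ContinuousAt.tendsto_setAverage [CompleteSpace E] {X ι : Type*} [MeasurableSpace X]
    [TopologicalSpace X] [OpensMeasurableSpace X] {μ : Measure X} [IsLocallyFiniteMeasure μ]
    {x : X} {f : X → E} (hf : ContinuousAt f x)
    (hfm : StronglyMeasurableAtFilter f (𝓝 x) μ) {s : ι → Set X} {l : Filter ι}
    (hs : Tendsto s l (𝓝 x).smallSets) (hμs : ∀ᶠ i in l, μ.real (s i) ≠ 0) :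
    Tendsto (fun i => ⨍ y in s i, f y ∂μ) l (𝓝 (f x)) := by
  have h := (hf.integral_sub_linear_isLittleO_ae hfm hs).tendsto_inv_smul_nhds_zero
  rw [← tendsto_sub_nhds_zero_iff]
  refine h.congr' (hμs.mono fun i hi => ?_)
  simp only [setAverage_eq, smul_sub, inv_smul_smul₀ hi]

noncomputable def scurl (M N : ℝ × ℝ → E) (x : ℝ × ℝ) : E :=
  fderiv ℝ N x (1, 0) - fderiv ℝ M x (0, 1)

noncomputable def circulation (M N : ℝ × ℝ → E) (a b c d : ℝ) : E :=
  (∫ t in a..b, M (t, c)) + (∫ t in c..d, N (b, t)) - (∫ t in a..b, M (t, d))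
    - ∫ t in c..d, N (a, t)

section

variable {U : Set (ℝ × ℝ)} {M N : ℝ × ℝ → E}

theorem continuousOn_scurl (hU : IsOpen U) (hM : ContDiffOn ℝ 1 M U) (hN : ContDiffOn ℝ 1 N U) :
    ContinuousOn (scurl M N) U :=
  ((hN.continuousOn_fderiv_of_isOpen hU le_rfl).clm_apply continuousOn_const).sub
    ((hM.continuousOn_fderiv_of_isOpen hU le_rfl).clm_apply continuousOn_const)

theorem circulation_eq_integral_scurl [CompleteSpace E] (hU : IsOpen U) (hM : ContDiffOn ℝ 1 M U)
    (hN : ContDiffOn ℝ 1 N U) {a b c d : ℝ} (hab : a ≤ b) (hcd : c ≤ d)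
    (hsub : Icc a b ×ˢ Icc c d ⊆ U) :
    circulation M N a b c d = ∫ x in Icc a b ×ˢ Icc c d, scurl M N x := by
  have hderiv {F : ℝ × ℝ → E} (hF : ContDiffOn ℝ 1 F U) :
      ∀ x ∈ Ioo a b ×ˢ Ioo c d \ ∅, HasFDerivAt F (fderiv ℝ F x) x := fun x hx =>
    ((hF.contDiffAt (hU.mem_nhds (hsub (prod_mono Ioo_subset_Icc_self Ioo_subset_Icc_self
      hx.1)))).differentiableAt one_ne_zero).hasFDerivAt
  rw [Icc_prod_Icc] at hsub ⊢
  have hcurl : scurl M N = fun x => fderiv ℝ N x (1, 0) + (-fderiv ℝ M x) (0, 1) := by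
    funext x
    simp [scurl, sub_eq_add_neg]
  have hint : IntegrableOn (scurl M N) (Icc (a, c) (b, d)) :=
    ((continuousOn_scurl hU hM hN).mono hsub).integrableOn_compact isCompact_Icc
  simp only [hcurl] at hint ⊢
  rw [integral_divergence_prod_Icc_of_hasFDerivAt_off_countable_of_le N (-M)
    (fderiv ℝ N) (fun x => -fderiv ℝ M x) (a, c) (b, d) ⟨hab, hcd⟩ ∅ countable_empty
    (hN.continuousOn.mono hsub) (hM.continuousOn.mono hsub).neg (hderiv hN)
    (fun x hx => (hderiv hM x hx).neg) hint]
  simp only [circulation, Pi.neg_apply, intervalIntegral.integral_neg]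
  abel

end

/-- If `Rₙ = [aₙ,bₙ] × [cₙ,dₙ]` is a sequence of rectangles of positive area
contained in a fixed open set `U`, each containing a fixed point `p`, whose
diameters tend to `0`, and `F = (M, N)` is a C¹ vector field on `U`, then
`(1/area Rₙ)` times the counterclockwise circulation of `F` around `∂Rₙ`
converges to `scurl F (p) = ∂N/∂x (p) − ∂M/∂y (p)`. -/
theorem circulation_tendsto_scurl
    (U : Set (ℝ × ℝ)) (hU : IsOpen U)
    (M N : ℝ × ℝ → ℝ)
    (hM : ContDiffOn ℝ 1 M U) (hN : ContDiffOn ℝ 1 N U)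
    (p : ℝ × ℝ)
    (a b c d : ℕ → ℝ)
    (hab : ∀ n, a n < b n) (hcd : ∀ n, c n < d n)
    (hsub : ∀ n, Set.Icc (a n) (b n) ×ˢ Set.Icc (c n) (d n) ⊆ U)
    (hp : ∀ n, p ∈ Set.Icc (a n) (b n) ×ˢ Set.Icc (c n) (d n))
    (hdiam : Tendsto
      (fun n => Metric.diam (Set.Icc (a n) (b n) ×ˢ Set.Icc (c n) (d n)))
      atTop (nhds 0)) :
    Tendsto
      (fun n => (1 / ((b n - a n) * (d n - c n))) *
          ((∫ t in (a n)..(b n), M (t, c n)) + (∫ t in (c n)..(d n), N (b n, t))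
            - (∫ t in (a n)..(b n), M (t, d n))
            - (∫ t in (c n)..(d n), N (a n, t))))
      atTop (nhds (fderiv ℝ N p (1, 0) - fderiv ℝ M p (0, 1))) := by
  have harea n : volume.real (Icc (a n) (b n) ×ˢ Icc (c n) (d n)) = (b n - a n) * (d n - c n) := by
    rw [Measure.volume_eq_prod, measureReal_prod_prod, Real.volume_real_Icc_of_le (hab n).le,
      Real.volume_real_Icc_of_le (hcd n).le]
  have hpU : p ∈ U := hsub 0 (hp 0)
  have hcurl := continuousOn_scurl hU hM hN
  have hshrink := tendsto_smallSets_nhds_of_tendsto_diam hp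
    (fun _ => (isCompact_Icc.prod isCompact_Icc).isBounded) hdiam
  have hpos : ∀ᶠ n in atTop, volume.real (Icc (a n) (b n) ×ˢ Icc (c n) (d n)) ≠ 0 :=
    Eventually.of_forall fun n => harea n ▸ mul_ne_zero (sub_pos.2 (hab n)).ne'
      (sub_pos.2 (hcd n)).ne'
  refine ((hcurl.continuousAt (hU.mem_nhds hpU)).tendsto_setAverage
    (hcurl.stronglyMeasurableAtFilter (μ := volume) hU p hpU) hshrink hpos).congr fun n => ?_
  rw [setAverage_eq, harea, ← circulation_eq_integral_scurl hU hM hN (hab n).le (hcd n).le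
    (hsub n), smul_eq_mul, one_div, circulation]
end

section
/- Let R = [a,b] × [c,d] with a < b, c < d, and let H : ℝ² → ℝ² be of class C² on an open neighborhood of R, injective on R, with det DH(x) > 0 for all x ∈ R. Let F be a C¹ vector field on (an open neighborhood of) the image S = H(R). Then the line integral of F along the closed curve H ∘ γ, where γ is a piecewise-C¹ counterclockwise parameterization of ∂R, equals the double integral ∬_S scurl F dA over the image set S = H(R). In other words, Green's theorem holds for S and F. -/
/-!
Pull the form `ω = M dx + N dy` back along `H`. The line integral of `ω` along `H ∘ γ` is that of
`H^*ω` along `γ`, and Green's theorem on the rectangle turns it into `∫_R curl (H^*ω)`. Pull-back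
commutes with `d`, so `curl (H^*ω) = (scurl F ∘ H) · det DH`; as `det DH > 0` and `H` is injective
on `R`, the change-of-variables formula identifies this integral with `∬_S scurl F`.
-/

open MeasureTheory

/-- The Euclidean dot product on `ℝ × ℝ`. -/
def dot (u v : ℝ × ℝ) : ℝ := u.1 * v.1 + u.2 * v.2

open Set

theorem ContinuousLinearMap.apply_prod_eq (L : ℝ × ℝ →L[ℝ] ℝ) (z : ℝ × ℝ) :
    L z = z.1 * L (1, 0) + z.2 * L (0, 1) := by
  have hz : z = z.1 • ((1 : ℝ), (0 : ℝ)) + z.2 • ((0 : ℝ), (1 : ℝ)) := by ext <;> simp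
  conv_lhs => rw [hz, map_add, map_smul, map_smul]
  simp

theorem ContinuousLinearMap.det_prod_eq (A : ℝ × ℝ →L[ℝ] ℝ × ℝ) :
    A.det = (A (1, 0)).1 * (A (0, 1)).2 - (A (1, 0)).2 * (A (0, 1)).1 := by
  rw [ContinuousLinearMap.det, ← LinearMap.det_toMatrix (Module.Basis.finTwoProd ℝ),
    Matrix.det_fin_two]
  simp only [Fin.isValue, LinearMap.toMatrix_apply, Module.Basis.finTwoProd_zero, coe_coe,
    Module.Basis.coe_finTwoProd_repr, Module.Basis.finTwoProd_one, Matrix.cons_val_zero,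
    Matrix.cons_val_one, Matrix.cons_val_fin_one]
  ring

theorem dot_apply_sub_dot_apply_eq_mul_det (L K : ℝ × ℝ →L[ℝ] ℝ) (A : ℝ × ℝ →L[ℝ] ℝ × ℝ) :
    dot (L (A (1, 0)), K (A (1, 0))) (A (0, 1)) - dot (L (A (0, 1)), K (A (0, 1))) (A (1, 0)) =
      (K (1, 0) - L (0, 1)) * A.det := by
  rw [A.det_prod_eq, dot, dot, L.apply_prod_eq (A (1, 0)), L.apply_prod_eq (A (0, 1)),
    K.apply_prod_eq (A (1, 0)), K.apply_prod_eq (A (0, 1))]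
  ring

theorem deriv_apply_mk_const_right {E : Type*} [NormedAddCommGroup E] [NormedSpace ℝ E]
    {H : ℝ × ℝ → E} {x y : ℝ} (hH : DifferentiableAt ℝ H (x, y)) :
    deriv (fun s => H (s, y)) x = fderiv ℝ H (x, y) (1, 0) :=
  (hH.hasFDerivAt.comp_hasDerivAt x ((hasDerivAt_id x).prodMk (hasDerivAt_const x y))).deriv

theorem deriv_apply_mk_const_left {E : Type*} [NormedAddCommGroup E] [NormedSpace ℝ E]
    {H : ℝ × ℝ → E} {x y : ℝ} (hH : DifferentiableAt ℝ H (x, y)) :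
    deriv (fun s => H (x, s)) y = fderiv ℝ H (x, y) (0, 1) :=
  (hH.hasFDerivAt.comp_hasDerivAt y ((hasDerivAt_const y x).prodMk (hasDerivAt_id y))).deriv

theorem integral_curl_prod_Icc {P Q : ℝ × ℝ → ℝ} {W : Set (ℝ × ℝ)} {a b c d : ℝ}
    (hab : a ≤ b) (hcd : c ≤ d) (hW : IsOpen W) (hRW : Icc a b ×ˢ Icc c d ⊆ W)
    (hP : ContDiffOn ℝ 1 P W) (hQ : ContDiffOn ℝ 1 Q W) :
    ∫ x in Icc a b ×ˢ Icc c d, (fderiv ℝ Q x (1, 0) - fderiv ℝ P x (0, 1)) =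
      (∫ t in a..b, P (t, c)) + (∫ t in c..d, Q (b, t)) - (∫ t in a..b, P (t, d)) -
        ∫ t in c..d, Q (a, t) := by
  have hdiff : ∀ {F : ℝ × ℝ → ℝ}, ContDiffOn ℝ 1 F W → ∀ x ∈ W, HasFDerivAt F (fderiv ℝ F x) x :=
    fun hF x hx => ((hF.contDiffAt (hW.mem_nhds hx)).differentiableAt one_ne_zero).hasFDerivAt
  have hcurl : ContinuousOn (fun x => fderiv ℝ Q x (1, 0) - fderiv ℝ P x (0, 1)) W :=
    ((hQ.continuousOn_fderiv_of_isOpen hW le_rfl).clm_apply continuousOn_const).sub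
      ((hP.continuousOn_fderiv_of_isOpen hW le_rfl).clm_apply continuousOn_const)
  have hint : IntegrableOn _ (Icc a b ×ˢ Icc c d) :=
    (hcurl.mono hRW).integrableOn_compact (isCompact_Icc.prod isCompact_Icc)
  have hinterior : Ioo a b ×ˢ Ioo c d ⊆ W :=
    (prod_mono Ioo_subset_Icc_self Ioo_subset_Icc_self).trans hRW
  rw [Icc_prod_Icc] at hRW hint ⊢
  have := integral_divergence_prod_Icc_of_hasFDerivAt_off_countable_of_le Q (-P)
    (fderiv ℝ Q) (-fderiv ℝ P) (a, c) (b, d) ⟨hab, hcd⟩ ∅ countable_empty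
    (hQ.continuousOn.mono hRW) (hP.continuousOn.mono hRW).neg
    (fun x hx => hdiff hQ x (hinterior hx.1))
    (fun x hx => (hdiff hP x (hinterior hx.1)).neg)
    (by simpa [sub_eq_add_neg] using hint)
  simp only [Pi.neg_apply, neg_apply, ← sub_eq_add_neg,
    intervalIntegral.integral_neg] at this
  rw [this]
  ring

/-- The pull-back `H^*(M dx + N dy)` of a `1`-form, evaluated on the constant vector field `w`. -/
noncomputable def pullbackForm (M N : ℝ × ℝ → ℝ) (H : ℝ × ℝ → ℝ × ℝ) (w q : ℝ × ℝ) : ℝ :=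
  dot (M (H q), N (H q)) (fderiv ℝ H q w)

section pullbackForm

variable {M N : ℝ × ℝ → ℝ} {H : ℝ × ℝ → ℝ × ℝ}

theorem integral_dot_deriv_apply_mk_const_right {a b y : ℝ} (hab : a ≤ b)
    (hH : ∀ t ∈ Icc a b, DifferentiableAt ℝ H (t, y)) :
    ∫ t in a..b, dot (M (H (t, y)), N (H (t, y))) (deriv (fun s => H (s, y)) t) =
      ∫ t in a..b, pullbackForm M N H (1, 0) (t, y) :=
  intervalIntegral.integral_congr fun t ht => by
    rw [pullbackForm, deriv_apply_mk_const_right (hH t (uIcc_of_le hab ▸ ht))]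

theorem integral_dot_deriv_apply_mk_const_left {c d x : ℝ} (hcd : c ≤ d)
    (hH : ∀ t ∈ Icc c d, DifferentiableAt ℝ H (x, t)) :
    ∫ t in c..d, dot (M (H (x, t)), N (H (x, t))) (deriv (fun s => H (x, s)) t) =
      ∫ t in c..d, pullbackForm M N H (0, 1) (x, t) :=
  intervalIntegral.integral_congr fun t ht => by
    rw [pullbackForm, deriv_apply_mk_const_left (hH t (uIcc_of_le hcd ▸ ht))]

theorem ContDiffOn.pullbackForm {W V : Set (ℝ × ℝ)} (hW : IsOpen W) (hH : ContDiffOn ℝ 2 H W)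
    (hM : ContDiffOn ℝ 1 M V) (hN : ContDiffOn ℝ 1 N V) (hWV : MapsTo H W V) (w : ℝ × ℝ) :
    ContDiffOn ℝ 1 (pullbackForm M N H w) W := by
  have hH₁ : ContDiffOn ℝ 1 H W := hH.of_le (by norm_num)
  have hHw : ContDiffOn ℝ 1 (fun q => fderiv ℝ H q w) W :=
    (hH.fderiv_of_isOpen hW (by norm_num)).clm_apply contDiffOn_const
  exact ((hM.comp hH₁ hWV).mul hHw.fst).add ((hN.comp hH₁ hWV).mul hHw.snd)

theorem fderiv_pullbackForm_apply {p : ℝ × ℝ} (hH : DifferentiableAt ℝ H p)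
    (hH' : DifferentiableAt ℝ (fderiv ℝ H) p) (hM : DifferentiableAt ℝ M (H p))
    (hN : DifferentiableAt ℝ N (H p)) (v w : ℝ × ℝ) :
    fderiv ℝ (pullbackForm M N H w) p v =
      dot (fderiv ℝ M (H p) (fderiv ℝ H p v), fderiv ℝ N (H p) (fderiv ℝ H p v))
          (fderiv ℝ H p w) +
        dot (M (H p), N (H p)) (fderiv ℝ (fderiv ℝ H) p v w) := by
  have hMH : HasFDerivAt (fun q => M (H q)) ((fderiv ℝ M (H p)).comp (fderiv ℝ H p)) p :=
    hM.hasFDerivAt.comp p hH.hasFDerivAt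
  have hNH : HasFDerivAt (fun q => N (H q)) ((fderiv ℝ N (H p)).comp (fderiv ℝ H p)) p :=
    hN.hasFDerivAt.comp p hH.hasFDerivAt
  have hHw : HasFDerivAt (fun q => fderiv ℝ H q w)
      ((ContinuousLinearMap.apply ℝ (ℝ × ℝ) w).comp (fderiv ℝ (fderiv ℝ H) p)) p :=
    (ContinuousLinearMap.apply ℝ (ℝ × ℝ) w).hasFDerivAt.comp p hH'.hasFDerivAt
  have hform : HasFDerivAt (pullbackForm M N H w) _ p :=
    (hMH.mul hHw.fst).add (hNH.mul hHw.snd)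
  rw [hform.fderiv]
  simp only [add_apply, smul_apply, ContinuousLinearMap.comp_apply,
    ContinuousLinearMap.apply_apply, ContinuousLinearMap.coe_fst', ContinuousLinearMap.coe_snd',
    smul_eq_mul, dot]
  ring

/-- `d(H^*ω) = H^*(dω)`: the second derivatives of `H` cancel by symmetry. -/
theorem curl_pullbackForm {p : ℝ × ℝ} (hH : ContDiffAt ℝ 2 H p)
    (hM : DifferentiableAt ℝ M (H p)) (hN : DifferentiableAt ℝ N (H p)) :
    fderiv ℝ (pullbackForm M N H (0, 1)) p (1, 0) - fderiv ℝ (pullbackForm M N H (1, 0)) p (0, 1) =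
      (fderiv ℝ N (H p) (1, 0) - fderiv ℝ M (H p) (0, 1)) * (fderiv ℝ H p).det := by
  have hH₁ : DifferentiableAt ℝ H p := hH.differentiableAt (by norm_num)
  have hH' : DifferentiableAt ℝ (fderiv ℝ H) p :=
    (hH.fderiv_right (m := 1) (by norm_num)).differentiableAt one_ne_zero
  have hsymm : fderiv ℝ (fderiv ℝ H) p (1, 0) (0, 1) = fderiv ℝ (fderiv ℝ H) p (0, 1) (1, 0) :=
    hH.isSymmSndFDerivAt (by simp) _ _
  rw [fderiv_pullbackForm_apply hH₁ hH' hM hN, fderiv_pullbackForm_apply hH₁ hH' hM hN, hsymm,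
    ← dot_apply_sub_dot_apply_eq_mul_det]
  ring

end pullbackForm

/-- **Green's theorem for a diffeomorphic image of a rectangle.**
Let `R = [a,b] × [c,d]` (with `a < b`, `c < d`), let `H` be C² on an open
neighborhood `U` of `R`, injective on `R`, with `det DH > 0` on `R`, and let
`F = (M, N)` be a C¹ vector field on an open neighborhood of `S = H(R)`.  Then
the line integral of `F` along `H ∘ γ`, where `γ` is the standard piecewise-C¹
counterclockwise parameterization of `∂R` (traversing the bottom, right, top
and left sides in turn), equals `∬_S scurl F dA`. -/
theorem greens_theorem_image_of_rectangle
    (a b c d : ℝ) (hab : a < b) (hcd : c < d)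
    (U : Set (ℝ × ℝ)) (hU : IsOpen U)
    (hRU : Set.Icc a b ×ˢ Set.Icc c d ⊆ U)
    (H : ℝ × ℝ → ℝ × ℝ) (hH : ContDiffOn ℝ 2 H U)
    (hinj : Set.InjOn H (Set.Icc a b ×ˢ Set.Icc c d))
    (hdet : ∀ p ∈ Set.Icc a b ×ˢ Set.Icc c d, 0 < (fderiv ℝ H p).det)
    (V : Set (ℝ × ℝ)) (hV : IsOpen V)
    (hSV : H '' (Set.Icc a b ×ˢ Set.Icc c d) ⊆ V)
    (M N : ℝ × ℝ → ℝ)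
    (hM : ContDiffOn ℝ 1 M V) (hN : ContDiffOn ℝ 1 N V) :
    (∫ t in a..b, dot (M (H (t, c)), N (H (t, c))) (deriv (fun s => H (s, c)) t))
        + (∫ t in c..d, dot (M (H (b, t)), N (H (b, t))) (deriv (fun s => H (b, s)) t))
        - (∫ t in a..b, dot (M (H (t, d)), N (H (t, d))) (deriv (fun s => H (s, d)) t))
        - (∫ t in c..d, dot (M (H (a, t)), N (H (a, t))) (deriv (fun s => H (a, s)) t))
      = ∫ p in H '' (Set.Icc a b ×ˢ Set.Icc c d),
          (fderiv ℝ N p (1, 0) - fderiv ℝ M p (0, 1)) := by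
  set R := Icc a b ×ˢ Icc c d
  set W := U ∩ H ⁻¹' V
  have hW : IsOpen W := hH.continuousOn.isOpen_inter_preimage hU hV
  have hRW : R ⊆ W := fun p hp => ⟨hRU hp, hSV (mem_image_of_mem H hp)⟩
  have hH₂ : ∀ p ∈ R, ContDiffAt ℝ 2 H p := fun p hp => hH.contDiffAt (hU.mem_nhds (hRU hp))
  have hH₁ : ∀ p ∈ R, DifferentiableAt ℝ H p := fun p hp =>
    (hH₂ p hp).differentiableAt two_ne_zero
  have hFH : ∀ {F : ℝ × ℝ → ℝ}, ContDiffOn ℝ 1 F V → ∀ p ∈ R, DifferentiableAt ℝ F (H p) :=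
    fun hF p hp => (hF.contDiffAt (hV.mem_nhds (hRW hp).2)).differentiableAt one_ne_zero
  have hform := ContDiffOn.pullbackForm hW (hH.mono inter_subset_left) hM hN (fun _ hq => hq.2)
  rw [integral_dot_deriv_apply_mk_const_right hab.le fun t ht => hH₁ _ ⟨ht, left_mem_Icc.2 hcd.le⟩,
    integral_dot_deriv_apply_mk_const_left hcd.le fun t ht => hH₁ _ ⟨right_mem_Icc.2 hab.le, ht⟩,
    integral_dot_deriv_apply_mk_const_right hab.le fun t ht => hH₁ _ ⟨ht, right_mem_Icc.2 hcd.le⟩,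
    integral_dot_deriv_apply_mk_const_left hcd.le fun t ht => hH₁ _ ⟨left_mem_Icc.2 hab.le, ht⟩,
    ← integral_curl_prod_Icc hab.le hcd.le hW hRW (hform _) (hform _),
    integral_image_eq_integral_abs_det_fderiv_smul volume (measurableSet_Icc.prod measurableSet_Icc)
      (fun p hp => (hH₁ p hp).hasFDerivAt.hasFDerivWithinAt) hinj]
  refine setIntegral_congr_fun (measurableSet_Icc.prod measurableSet_Icc) fun p hp => ?_
  rw [curl_pullbackForm (hH₂ p hp) (hFH hM p hp) (hFH hN p hp), abs_of_pos (hdet p hp),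
    smul_eq_mul, mul_comm]
end

section
/- Let G be a simple graph on a finite vertex set V and let F : V → V → ℝ be antisymmetric (F v w = −F w v for all v, w), representing a combinatorial vector field on the edges of G. If for every cycle c in G (a nontrivial closed walk that repeats no edges and no vertices except its endpoint) the sum of F over the consecutive oriented edges of c is 0, then for every closed walk p in G the sum of F over the consecutive oriented edges of p is 0. -/
/-!
A closed walk `v → w → ⋯ → v` has the same integral as `v → w` followed by the bypass of its
tail: each loop that `Walk.bypass` cuts out is a closed walk `u → w → ⋯ → u` whose tail is a path,
and such a walk is either a cycle or the backtrack `u → w → u`, whose integral vanishes by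
antisymmetry. The walk `v → w` followed by a path back to `v` is again of this form.
-/

namespace SimpleGraph.Walk

variable {V : Type*} {G : SimpleGraph V} (F : V → V → ℝ)

def integral {u v : V} (p : G.Walk u v) : ℝ :=
  (p.darts.map fun d => F d.fst d.snd).sum

@[simp]
lemma integral_nil {u : V} : integral F (nil : G.Walk u u) = 0 := rfl

@[simp]
lemma integral_cons {u v w : V} (h : G.Adj u v) (p : G.Walk v w) :
    integral F (cons h p) = F u v + integral F p := by
  simp [integral]

@[simp]
lemma integral_append {u v w : V} (p : G.Walk u v) (q : G.Walk v w) :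
    integral F (p.append q) = integral F p + integral F q := by
  simp [integral]

variable {F}

lemma integral_cons_eq_zero_of_isPath (hF : ∀ v w, F v w = -F w v)
    (hcycle : ∀ (v : V) (c : G.Walk v v), c.IsCycle → integral F c = 0)
    {u w : V} (h : G.Adj u w) {q : G.Walk w u} (hq : q.IsPath) : integral F (cons h q) = 0 := by
  by_cases he : s(u, w) ∈ q.edges
  · rw [hq.eq_adj_toWalk_of_mem_edges (Sym2.eq_swap ▸ he)]
    simp [hF w u]
  · exact hcycle u _ ((cons_isCycle_iff q h).mpr ⟨hq, he⟩)

lemma integral_bypass [DecidableEq V] (hF : ∀ v w, F v w = -F w v)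
    (hcycle : ∀ (v : V) (c : G.Walk v v), c.IsCycle → integral F c = 0)
    {u v : V} (p : G.Walk u v) : integral F p.bypass = integral F p := by
  induction p with
  | nil => rfl
  | cons h p ih =>
    simp only [bypass]
    split_ifs with hu
    · have hloop := integral_cons_eq_zero_of_isPath hF hcycle h ((bypass_isPath p).takeUntil hu)
      have hsplit := congrArg (integral F) (p.bypass.take_spec hu)
      rw [integral_append] at hsplit
      rw [integral_cons] at hloop ⊢
      linarith
    · simp [ih]

end SimpleGraph.Walk

open SimpleGraph

theorem closed_walk_integral_zero_of_cycle_integral_zero_general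
    {V : Type*} (G : SimpleGraph V)
    (F : V → V → ℝ) (hF : ∀ v w, F v w = -F w v)
    (hcycle : ∀ (v : V) (c : G.Walk v v), c.IsCycle →
      (c.darts.map (fun d => F d.toProd.1 d.toProd.2)).sum = 0) :
    ∀ (v : V) (p : G.Walk v v),
      (p.darts.map (fun d => F d.toProd.1 d.toProd.2)).sum = 0 := by
  classical
  intro v p
  change Walk.integral F p = 0
  cases p with
  | nil => rfl
  | cons h q =>
    have hbypass := Walk.integral_cons_eq_zero_of_isPath hF hcycle h (Walk.bypass_isPath q)
    rwa [Walk.integral_cons, Walk.integral_bypass hF hcycle] at hbypass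

/-- For a combinatorial vector field (an antisymmetric `F : V → V → ℝ`) on a
simple graph `G` with finite vertex set, if the integral of `F` around every
cycle (a nontrivial closed walk repeating no edges and no vertices but its
endpoint) is `0`, then the integral of `F` around every closed walk is `0`.
The integral of `F` over a walk is the sum of `F` over its consecutive
oriented edges (darts). -/
theorem closed_walk_integral_zero_of_cycle_integral_zero
    {V : Type*} [Fintype V] (G : SimpleGraph V)
    (F : V → V → ℝ) (hF : ∀ v w, F v w = -F w v)
    (hcycle : ∀ (v : V) (c : G.Walk v v), c.IsCycle →
      (c.darts.map (fun d => F d.toProd.1 d.toProd.2)).sum = 0) :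
    ∀ (v : V) (p : G.Walk v v),
      (p.darts.map (fun d => F d.toProd.1 d.toProd.2)).sum = 0 :=
  closed_walk_integral_zero_of_cycle_integral_zero_general G F hF hcycle
end

section
/- Let G be a connected simple graph on a vertex set V and let F : V → V → ℝ be antisymmetric (F v w = −F w v for all v, w). Then the sum of F over the consecutive oriented edges of every closed walk in G is 0 if and only if there exists a function f : V → ℝ such that F v w = f(w) − f(v) for every pair of adjacent vertices v, w; that is, F is (the same as) the tilt of some vertex scalar field f. -/
private def wint {V : Type*} {G : SimpleGraph V} (F : V → V → ℝ) {u v : V}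
    (p : G.Walk u v) : ℝ :=
  (p.darts.map (fun d => F d.toProd.1 d.toProd.2)).sum

private lemma wint_cons {V : Type*} {G : SimpleGraph V} (F : V → V → ℝ)
    {u x v : V} (h : G.Adj u x) (p : G.Walk x v) :
    wint F (SimpleGraph.Walk.cons h p) = F u x + wint F p := by
  simp [wint]

private lemma wint_append {V : Type*} {G : SimpleGraph V} (F : V → V → ℝ)
    {u x v : V} (p : G.Walk u x) (q : G.Walk x v) :
    wint F (p.append q) = wint F p + wint F q := by
  simp [wint, SimpleGraph.Walk.darts_append]

private lemma wint_reverse {V : Type*} {G : SimpleGraph V} (F : V → V → ℝ)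
    (hF : ∀ v w, F v w = -F w v) {u v : V} (p : G.Walk u v) :
    wint F p.reverse = -wint F p := by
  simp only [wint, SimpleGraph.Walk.darts_reverse, List.map_reverse, List.sum_reverse,
    List.map_map]
  have hfun : ((fun d => F d.toProd.1 d.toProd.2) ∘ SimpleGraph.Dart.symm) =
      fun d : G.Dart => -(F d.toProd.1 d.toProd.2) := by
    funext d
    simp [SimpleGraph.Dart.symm, ← hF]
  rw [hfun]
  induction p.darts with
  | nil => simp
  | cons a l ih => simp [ih]; ring

private lemma wint_of_tilt {V : Type*} {G : SimpleGraph V} (f : V → ℝ)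
    (F : V → V → ℝ) (hf : ∀ v w, G.Adj v w → F v w = f w - f v)
    {u v : V} (p : G.Walk u v) : wint F p = f v - f u := by
  induction p with
  | nil => simp [wint]
  | cons h q ih => rw [wint_cons, ih, hf _ _ h]; ring

/-- For a combinatorial vector field (an antisymmetric `F : V → V → ℝ`) on a
connected simple graph `G`, the integral of `F` around every closed walk is `0`
if and only if `F` is the tilt of some vertex scalar field, i.e. there is
`f : V → ℝ` with `F v w = f w − f v` for every pair of adjacent vertices
`v, w`.  The integral of `F` over a walk is the sum of `F` over its
consecutive oriented edges (darts). -/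
theorem closed_walk_integral_zero_iff_tilt
    {V : Type*} (G : SimpleGraph V) (hG : G.Connected)
    (F : V → V → ℝ) (hF : ∀ v w, F v w = -F w v) :
    (∀ (v : V) (p : G.Walk v v),
        (p.darts.map (fun d => F d.toProd.1 d.toProd.2)).sum = 0)
      ↔
    (∃ f : V → ℝ, ∀ v w, G.Adj v w → F v w = f w - f v) := by
  constructor
  · intro h
    obtain ⟨v0⟩ := hG.nonempty
    refine ⟨fun v => wint F (hG v0 v).some, ?_⟩
    intro v w hadj
    set p := (hG v0 v).some
    set q := (hG v0 w).some
    have hc := h v0 (p.append (SimpleGraph.Walk.cons hadj q.reverse))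
    have hc' : wint F (p.append (SimpleGraph.Walk.cons hadj q.reverse)) = 0 := hc
    rw [wint_append, wint_cons, wint_reverse F hF] at hc'
    linarith
  · rintro ⟨f, hf⟩ v p
    have := wint_of_tilt f F hf p
    simpa [wint] using this
end
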